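/- Let θ₀ > 0 and let Y* = (ℝ²∖{0})/G be the quotient of the punctured plane by the group G generated by the boost H_{θ₀}, with the quotient topology. Then Y* is T1 but not Hausdorff (not T2). -/

import Mathlib

/-
In the light-cone coordinates x + y and x - y the boost `H_θ` multiplies by `e^θ` and `e^{-θ}`.
Each flow line `θ ↦ H_θ p` of the punctured plane has a continuous retraction onto `ℝ` (a logarithm
of the norm on the two light-like lines, `arsinh` of the light-cone coordinates elsewhere), so it
is a closed embedding and the `G`-orbit of `p`, the image of `θ₀ℤ`, is closed: the quotient is T1.
For the light-like vectors `u = (1, 1)` and `v = (1, -1)`, the points `v + e^{-nθ₀} u → v` are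
carried by `H_{nθ₀}` to `e^{-nθ₀} v + u → u`; as `u` and `v` lie in different orbits, their
classes have no disjoint neighbourhoods.
-/

/-- The hyperbolic rotation (boost) with rapidity θ acting on ℝ². -/
noncomputable def boost (θ : ℝ) (p : ℝ × ℝ) : ℝ × ℝ :=
  (p.1 * Real.cosh θ + p.2 * Real.sinh θ, p.1 * Real.sinh θ + p.2 * Real.cosh θ)

/-- The punctured plane with the subspace topology. -/
def PuncturedPlane : Type := {p : ℝ × ℝ // p ≠ 0}

instance : TopologicalSpace PuncturedPlane := instTopologicalSpaceSubtype

/-- Two nonzero points are related iff one is the image of the other under an iterate of the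
boost H_{θ₀}. -/
def boostRel' (θ₀ : ℝ) (p q : PuncturedPlane) : Prop := ∃ n : ℤ, q.val = boost (n * θ₀) p.val

open Real Filter Topology Function

theorem boost_boost (a b : ℝ) (p : ℝ × ℝ) : boost a (boost b p) = boost (a + b) p := by
  simp only [boost, cosh_add, sinh_add]
  ext <;> ring

theorem boost_fst_add_snd (θ : ℝ) (p : ℝ × ℝ) :
    (boost θ p).1 + (boost θ p).2 = exp θ * (p.1 + p.2) := by
  simp only [boost, ← cosh_add_sinh]
  ring

theorem boost_fst_sub_snd (θ : ℝ) (p : ℝ × ℝ) :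
    (boost θ p).1 - (boost θ p).2 = exp (-θ) * (p.1 - p.2) := by
  simp only [boost, ← cosh_sub_sinh]
  ring

theorem boost_zero (p : ℝ × ℝ) : boost 0 p = p := by
  simp [boost]

theorem boost_add (θ : ℝ) (p q : ℝ × ℝ) : boost θ (p + q) = boost θ p + boost θ q := by
  simp only [boost, Prod.fst_add, Prod.snd_add, Prod.mk_add_mk]
  ext <;> ring

theorem boost_smul (θ c : ℝ) (p : ℝ × ℝ) : boost θ (c • p) = c • boost θ p := by
  simp only [boost, Prod.smul_fst, Prod.smul_snd, Prod.smul_mk, smul_eq_mul]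
  ext <;> ring

theorem boost_of_snd_eq_fst (θ : ℝ) {p : ℝ × ℝ} (hp : p.2 = p.1) : boost θ p = exp θ • p := by
  simp only [boost, ← cosh_add_sinh, Prod.smul_def, smul_eq_mul]
  ext <;> simp only [hp] <;> ring

theorem boost_of_snd_eq_neg_fst (θ : ℝ) {p : ℝ × ℝ} (hp : p.2 = -p.1) :
    boost θ p = exp (-θ) • p := by
  simp only [boost, ← cosh_sub_sinh, Prod.smul_def, smul_eq_mul]
  ext <;> simp only [hp] <;> ring

theorem boost_ne_zero (θ : ℝ) {p : ℝ × ℝ} (hp : p ≠ 0) : boost θ p ≠ 0 := by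
  intro h
  have := congrArg (boost (-θ)) h
  rw [boost_boost, neg_add_cancel, boost_zero] at this
  exact hp (this.trans (by simp [boost]))

theorem equivalence_boostRel' (θ₀ : ℝ) : Equivalence (boostRel' θ₀) where
  refl p := ⟨0, by simp [boost_zero]⟩
  symm := by
    rintro p q ⟨n, hn⟩
    exact ⟨-n, by rw [hn, boost_boost]; push_cast; rw [neg_mul, neg_add_cancel, boost_zero]⟩
  trans := by
    rintro p q r ⟨m, hm⟩ ⟨n, hn⟩
    exact ⟨m + n, by rw [hn, hm, boost_boost]; push_cast; ring_nf⟩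

instance : T2Space PuncturedPlane := inferInstanceAs (T2Space {p : ℝ × ℝ // p ≠ 0})

noncomputable def boostFlow (p : PuncturedPlane) (θ : ℝ) : PuncturedPlane :=
  ⟨boost θ p.val, boost_ne_zero θ p.2⟩

theorem continuous_boostFlow (p : PuncturedPlane) : Continuous (boostFlow p) := by
  unfold boostFlow boost
  fun_prop

theorem exists_continuous_leftInverse_boostFlow (p : PuncturedPlane) :
    ∃ g : PuncturedPlane → ℝ, Continuous g ∧ LeftInverse g (boostFlow p) := by
  have hp : ‖p.val‖ ≠ 0 := norm_ne_zero_iff.mpr p.2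
  have hnorm : Continuous fun q : PuncturedPlane => ‖q.val‖ := by fun_prop
  have hnorm_ne (q : PuncturedPlane) : ‖q.val‖ ≠ 0 := norm_ne_zero_iff.mpr q.2
  by_cases hdiag : p.val.2 = p.val.1
  · refine ⟨fun q => log (‖q.val‖ / ‖p.val‖), ?_, fun θ => ?_⟩
    · exact (hnorm.div_const _).log fun q => div_ne_zero (hnorm_ne q) hp
    · simp only [boostFlow, boost_of_snd_eq_fst θ hdiag, norm_smul, norm_of_nonneg (exp_pos θ).le,
        mul_div_cancel_right₀ _ hp, log_exp]
  by_cases hanti : p.val.2 = -p.val.1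
  · refine ⟨fun q => -log (‖q.val‖ / ‖p.val‖), ?_, fun θ => ?_⟩
    · exact ((hnorm.div_const _).log fun q => div_ne_zero (hnorm_ne q) hp).neg
    · simp only [boostFlow, boost_of_snd_eq_neg_fst θ hanti, norm_smul,
        norm_of_nonneg (exp_pos _).le, mul_div_cancel_right₀ _ hp, log_exp, neg_neg]
  have ha : p.val.1 + p.val.2 ≠ 0 := fun h => hanti (by linarith)
  have hb : p.val.1 - p.val.2 ≠ 0 := fun h => hdiag (by linarith)
  refine ⟨fun q => arsinh (((q.val.1 + q.val.2) / (p.val.1 + p.val.2)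
    - (q.val.1 - q.val.2) / (p.val.1 - p.val.2)) / 2), continuous_arsinh.comp (by fun_prop),
    fun θ => ?_⟩
  simp only [boostFlow, boost_fst_add_snd, boost_fst_sub_snd, mul_div_cancel_right₀ _ ha,
    mul_div_cancel_right₀ _ hb, ← sinh_eq, arsinh_sinh]

theorem isClosedEmbedding_boostFlow (p : PuncturedPlane) : IsClosedEmbedding (boostFlow p) :=
  let ⟨_, hg, hgf⟩ := exists_continuous_leftInverse_boostFlow p
  hgf.isClosedEmbedding hg (continuous_boostFlow p)

theorem isClosed_range_intCast_mul (θ : ℝ) : IsClosed (Set.range fun n : ℤ => (n : ℝ) * θ) := by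
  have := isClosedMap_smul₀ θ _ Real.isClosed_range_intCast
  rw [← Set.range_comp] at this
  convert this using 2 with n
  exact mul_comm _ _

theorem isClosed_setOf_boostRel' (θ₀ : ℝ) (p : PuncturedPlane) :
    IsClosed {q | boostRel' θ₀ p q} := by
  have : {q | boostRel' θ₀ p q} = boostFlow p '' Set.range fun n : ℤ => (n : ℝ) * θ₀ := by
    ext q
    simp only [boostRel', Set.mem_ofPred_eq, Set.mem_image, Set.exists_range_iff, boostFlow]
    exact exists_congr fun n =>
      ⟨fun h => Subtype.ext h.symm, fun h => (congrArg Subtype.val h).symm⟩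
  rw [this]
  exact (isClosedEmbedding_boostFlow p).isClosedMap _ (isClosed_range_intCast_mul θ₀)

theorem Equivalence.t1Space_quot {X : Type*} [TopologicalSpace X] {r : X → X → Prop}
    (hr : Equivalence r) (h : ∀ x, IsClosed {y | r x y}) : T1Space (Quot r) := by
  refine ⟨Quot.ind fun x => ?_⟩
  rw [← isQuotientMap_quot_mk.isClosed_preimage]
  convert h x using 1
  ext y
  simp only [Set.mem_preimage, Set.mem_singleton_iff, hr.quot_mk_eq_iff, Set.mem_ofPred_eq]
  exact ⟨hr.symm, hr.symm⟩

theorem not_t2Space_quot_of_tendsto {X ι : Type*} [TopologicalSpace X] {r : X → X → Prop}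
    {l : Filter ι} [l.NeBot] {x y : ι → X} {a b : X} (hx : Tendsto x l (𝓝 a))
    (hy : Tendsto y l (𝓝 b)) (hxy : ∀ i, r (x i) (y i)) (hab : Quot.mk r a ≠ Quot.mk r b) :
    ¬ T2Space (Quot r) := by
  intro _
  have hxy' : Quot.mk r ∘ x = Quot.mk r ∘ y := funext fun i => Quot.sound (hxy i)
  refine hab (tendsto_nhds_unique ((continuous_quot_mk.tendsto a).comp hx) ?_)
  rw [hxy']
  exact (continuous_quot_mk.tendsto b).comp hy

theorem t1Space_quot_boostRel' (θ₀ : ℝ) : T1Space (Quot (boostRel' θ₀)) :=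
  (equivalence_boostRel' θ₀).t1Space_quot (isClosed_setOf_boostRel' θ₀)

theorem not_t2Space_quot_boostRel' {θ₀ : ℝ} (hθ₀ : 0 < θ₀) : ¬ T2Space (Quot (boostRel' θ₀)) := by
  let u : ℝ × ℝ := (1, 1)
  let v : ℝ × ℝ := (1, -1)
  let ε : ℕ → ℝ := fun n => exp (-(n * θ₀))
  have hε : Tendsto ε atTop (𝓝 0) :=
    tendsto_exp_neg_atTop_nhds_zero.comp (tendsto_natCast_atTop_atTop.atTop_mul_const hθ₀)
  have hx_ne (n : ℕ) : v + ε n • u ≠ 0 := fun h => by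
    have := congrArg Prod.fst h
    simp only [Prod.fst_add, Prod.smul_fst, smul_eq_mul, mul_one, Prod.fst_zero, v, u] at this
    linarith [exp_pos (-(n * θ₀))]
  let x (n : ℕ) : PuncturedPlane := ⟨v + ε n • u, hx_ne n⟩
  let y (n : ℕ) : PuncturedPlane := boostFlow (x n) ((n : ℤ) * θ₀)
  have hy (n : ℕ) : (y n).val = ε n • v + u := by
    simp only [y, x, boostFlow, boost_add, boost_smul, boost_of_snd_eq_fst _ (rfl : u.2 = u.1),
      boost_of_snd_eq_neg_fst _ (rfl : v.2 = -v.1), Int.cast_natCast, smul_smul, ε, ← exp_add,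
      neg_add_cancel, exp_zero, one_smul]
  let a : PuncturedPlane := ⟨v, by simp [v]⟩
  let b : PuncturedPlane := ⟨u, by simp [u]⟩
  have hxa : Tendsto x atTop (𝓝 a) := by
    refine tendsto_subtype_rng.2 ?_
    simpa using tendsto_const_nhds.add (hε.smul_const u)
  have hyb : Tendsto y atTop (𝓝 b) := by
    refine tendsto_subtype_rng.2 ?_
    simp only [hy]
    simpa using (hε.smul_const v).add_const u
  refine not_t2Space_quot_of_tendsto hxa hyb (fun n => ⟨n, rfl⟩) ?_
  intro hab
  obtain ⟨n, hn⟩ := ((equivalence_boostRel' θ₀).quot_mk_eq_iff a b).1 hab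
  rw [boost_of_snd_eq_neg_fst _ (rfl : v.2 = -v.1)] at hn
  have h₁ := congrArg Prod.fst hn
  have h₂ := congrArg Prod.snd hn
  simp only [Prod.smul_mk, smul_eq_mul, mul_one, mul_neg, v] at h₁ h₂
  linarith

theorem quotient_punctured_plane_T1_not_T2 (θ₀ : ℝ) (hθ₀ : 0 < θ₀) :
    T1Space (Quot (boostRel' θ₀)) ∧ ¬ T2Space (Quot (boostRel' θ₀)) :=
  ⟨t1Space_quot_boostRel' θ₀, not_t2Space_quot_boostRel' hθ₀⟩
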